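/- For every real x ≥ 2, ∑_{0 < n ≤ x} r₂(n)² ≤ C·x·log x for some absolute constant C, where r₂(n) is the number of representations of n as an ordered sum of two squares of integers. -/

import Mathlib

open Real

/-- r₂(n): number of pairs (a,b) ∈ ℤ² with a² + b² = n. -/
noncomputable def r2 (n : ℕ) : ℕ := Set.ncard {p : ℤ × ℤ | p.1^2 + p.2^2 = (n : ℤ)}

/-!
If `N z = N w` for Gaussian integers `z, w ≠ 0`, then dividing out `g = gcd(z, w)` gives
`z = g t` and `w = u g t̄` with `u` a unit, since `w / g` divides `t t̄` and is coprime
to `t`. So `∑_{n ≤ x} r₂(n)²` is at most `r₂(1)` times the number of pairs `(g, t)` of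
nonzero Gaussian integers with `N g · N t ≤ x`. Counting `t` by the lattice-point bound
`#{t ≠ 0 : N t ≤ y} ≤ 8y` leaves `8x ∑_{a ≤ x} r₂(a) / a`, which is `O(x log x)` by
partial summation against the same lattice-point bound.
-/

open Finset

local notation "ℤ[i]" => GaussianInt

theorem sum_div_le_mul_sum_inv (f : ℕ → ℝ) {C : ℝ} (hf : ∀ j, ∑ a ∈ Icc 1 j, f a ≤ C * j)
    (m : ℕ) : ∑ a ∈ Icc 1 m, f a / a ≤ C * ∑ a ∈ Icc 1 m, (a : ℝ)⁻¹ := by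
  -- summation by parts; the bound `R k ≤ C k` on the partial sums enters only through
  -- `R k (1/k - 1/(k+1)) ≤ C/(k+1)`
  have key : ∀ k : ℕ, ∑ a ∈ Icc 1 (k + 1), f a / a + C ≤
      C * ∑ a ∈ Icc 1 (k + 1), (a : ℝ)⁻¹ + (∑ a ∈ Icc 1 (k + 1), f a) / (k + 1 : ℕ) := by
    intro k
    induction k with
    | zero => simp [add_comm]
    | succ k ih =>
      rw [sum_Icc_succ_top (by omega), sum_Icc_succ_top (by omega) (fun a : ℕ => (a : ℝ)⁻¹),
        sum_Icc_succ_top (by omega) f]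
      have hR := hf (k + 1)
      set R := ∑ a ∈ Icc 1 (k + 1), f a
      have hk : (0 : ℝ) < (k + 1 : ℕ) := by positivity
      have hk' : (0 : ℝ) < (k + 1 + 1 : ℕ) := by positivity
      have hstep : R / (k + 1 : ℕ) - R / (k + 1 + 1 : ℕ) ≤ C * ((k + 1 + 1 : ℕ) : ℝ)⁻¹ := by
        rw [← div_eq_mul_inv, div_sub_div _ _ hk.ne' hk'.ne',
          div_le_div_iff₀ (by positivity) hk']
        push_cast at hR ⊢
        nlinarith
      rw [mul_add, add_div]
      linarith
  rcases m with _ | m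
  · simp
  · have hR : (∑ a ∈ Icc 1 (m + 1), f a) / (m + 1 : ℕ) ≤ C :=
      (div_le_iff₀ (by positivity)).2 (hf (m + 1))
    linarith [key m]

namespace GaussianInt

theorem norm_eq_sq_add_sq (z : ℤ[i]) : z.norm = z.re ^ 2 + z.im ^ 2 := by
  rw [Zsqrtd.norm_def]
  ring

theorem exists_eq_mul_and_eq_unit_mul_star_of_norm_eq {z w : ℤ[i]} (hw : w ≠ 0)
    (h : z.norm = w.norm) : ∃ g t u : ℤ[i], IsUnit u ∧ z = g * t ∧ w = u * g * star t := by
  obtain ⟨t, s, g, hts, rfl, rfl⟩ := UniqueFactorizationMonoid.exists_reduced_factors' z w hw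
  have hnorm : t.norm = s.norm := by
    rw [Zsqrtd.norm_mul, Zsqrtd.norm_mul] at h
    exact mul_left_cancel₀ (norm_pos.2 (left_ne_zero_of_mul hw)).ne' h
  -- `s` divides `t * star t = N t = N s`, and is coprime to `t`
  obtain ⟨v, hv⟩ : s ∣ star t := hts.symm.dvd_of_dvd_mul_left
    ⟨star s, by rw [← Zsqrtd.norm_eq_mul_conj, hnorm, Zsqrtd.norm_eq_mul_conj]⟩
  have hunit : IsUnit v := by
    have hN := congrArg Zsqrtd.norm hv
    rw [Zsqrtd.norm_conj, Zsqrtd.norm_mul, hnorm] at hN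
    rw [← Zsqrtd.norm_eq_one_iff' (by norm_num)]
    exact (mul_eq_left₀ (norm_pos.2 (right_ne_zero_of_mul hw)).ne').1 hN.symm
  obtain ⟨u, rfl⟩ := hunit
  refine ⟨g, t, ↑u⁻¹, Units.isUnit _, rfl, ?_⟩
  rw [hv, ← Units.inv_mul_cancel_left u (g * s)]
  ring

noncomputable def box (s : ℕ) : Finset ℤ[i] :=
  (Icc (-s : ℤ) s ×ˢ Icc (-s : ℤ) s).image fun p => ⟨p.1, p.2⟩

theorem mem_box_of_natAbs_le {s : ℕ} {z : ℤ[i]} (hre : z.re.natAbs ≤ s)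
    (him : z.im.natAbs ≤ s) : z ∈ box s :=
  mem_image.2 ⟨(z.re, z.im), by simp only [mem_product, mem_Icc]; omega, rfl⟩

theorem card_box_le (s : ℕ) : #(box s) ≤ (2 * s + 1) ^ 2 := by
  refine card_image_le.trans_eq ?_
  rw [card_product, Int.card_Icc, sq]
  congr 2 <;> omega

noncomputable def normFiber (n : ℕ) : Finset ℤ[i] := (box n).filter (·.norm.natAbs = n)

theorem mem_normFiber {n : ℕ} {z : ℤ[i]} : z ∈ normFiber n ↔ z.norm.natAbs = n := by
  refine mem_filter.trans (and_iff_right_of_imp fun h => mem_box_of_natAbs_le ?_ ?_) <;>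
    nlinarith [natAbs_norm_eq z]

theorem r2_eq_card_normFiber (n : ℕ) : r2 n = #(normFiber n) := by
  have : {p : ℤ × ℤ | p.1 ^ 2 + p.2 ^ 2 = (n : ℤ)} =
      (fun z : ℤ[i] => (z.re, z.im)) '' normFiber n := by
    ext ⟨a, b⟩
    simp only [Set.mem_ofPred_eq, Set.mem_image, mem_coe, mem_normFiber, Prod.mk.injEq]
    constructor
    · intro h
      refine ⟨⟨a, b⟩, ?_, rfl, rfl⟩
      rw [norm_eq_sq_add_sq, h]
      rfl
    · rintro ⟨z, hz, rfl, rfl⟩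
      have hN := norm_nonneg z
      rw [← norm_eq_sq_add_sq]
      omega
  have hinj : Function.Injective fun z : ℤ[i] => (z.re, z.im) :=
    fun z w h => Zsqrtd.ext (congrArg Prod.fst h) (congrArg Prod.snd h)
  rw [r2, this, Set.ncard_image_of_injective _ hinj, Set.ncard_coe_finset]

theorem pairwiseDisjoint_normFiber (s : Set ℕ) : s.PairwiseDisjoint normFiber :=
  fun _ _ _ _ hmn => disjoint_left.2 fun _ hm hn =>
    hmn ((mem_normFiber.1 hm).symm.trans (mem_normFiber.1 hn))

noncomputable def puncturedNormBall (k : ℕ) : Finset ℤ[i] := (Icc 1 k).biUnion normFiber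

theorem mem_puncturedNormBall {k : ℕ} {z : ℤ[i]} :
    z ∈ puncturedNormBall k ↔ z ≠ 0 ∧ z.norm.natAbs ≤ k := by
  simp only [puncturedNormBall, mem_biUnion, mem_Icc, mem_normFiber, exists_eq_right', ne_eq,
    ← norm_eq_zero]
  omega

theorem card_puncturedNormBall (k : ℕ) :
    #(puncturedNormBall k) = ∑ n ∈ Icc 1 k, #(normFiber n) :=
  card_biUnion (pairwiseDisjoint_normFiber _)

theorem card_puncturedNormBall_le (k : ℕ) : #(puncturedNormBall k) ≤ 8 * k := by
  set s := Nat.sqrt k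
  have hsub : puncturedNormBall k ⊆ (box s).erase 0 := by
    intro z hz
    obtain ⟨hz0, hzk⟩ := mem_puncturedNormBall.1 hz
    have hN := natAbs_norm_eq z
    refine mem_erase.2 ⟨hz0, mem_box_of_natAbs_le ?_ ?_⟩ <;> rw [Nat.le_sqrt] <;> nlinarith
  have hbox := card_box_le s
  have h0 : (0 : ℤ[i]) ∈ box s := mem_box_of_natAbs_le (by simp) (by simp)
  have hs : s ^ 2 ≤ k := Nat.sqrt_le' k
  have hs' : s ≤ s ^ 2 := Nat.le_self_pow two_ne_zero s
  calc #(puncturedNormBall k) ≤ #(box s) - 1 :=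
        (card_le_card hsub).trans (card_erase_of_mem h0).le
    _ ≤ 8 * k := by ring_nf at hbox ⊢; omega

theorem sum_card_normFiber_sq_le (m : ℕ) :
    ∑ n ∈ Icc 1 m, #(normFiber n) ^ 2 ≤
      #(normFiber 1) * ∑ g ∈ puncturedNormBall m, #(puncturedNormBall (m / g.norm.natAbs)) := by
  have hdisj : ((Icc 1 m : Finset ℕ) : Set ℕ).PairwiseDisjoint
      fun n => normFiber n ×ˢ normFiber n :=
    fun a ha b hb hab => disjoint_product.2 (.inl (pairwiseDisjoint_normFiber _ ha hb hab))
  simp only [sq, ← card_product, ← card_sigma, ← card_biUnion hdisj]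
  refine card_le_card_of_surjOn (fun p => (p.2.1 * p.2.2, p.1 * p.2.1 * star p.2.2)) ?_
  rintro ⟨z, w⟩ hzw
  obtain ⟨n, hn, hzw⟩ := mem_biUnion.1 (mem_coe.1 hzw)
  obtain ⟨hz, hw⟩ : z ∈ normFiber n ∧ w ∈ normFiber n := mem_product.1 hzw
  rw [mem_normFiber] at hz hw
  rw [mem_Icc] at hn
  have hw0 : w ≠ 0 := by rw [ne_eq, ← norm_eq_zero]; omega
  obtain ⟨g, t, u, hu, rfl, rfl⟩ := exists_eq_mul_and_eq_unit_mul_star_of_norm_eq hw0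
    (by rw [← abs_natCast_norm z, ← abs_natCast_norm w, hz, hw])
  rw [Zsqrtd.norm_mul, Int.natAbs_mul] at hz
  refine ⟨⟨u, g, t⟩, ?_, rfl⟩
  obtain ⟨hg, ht⟩ :=
    CanonicallyOrderedAdd.mul_pos.1 (hz ▸ hn.1 : 0 < g.norm.natAbs * t.norm.natAbs)
  have hgm : g.norm.natAbs ≤ m := (Nat.le_mul_of_pos_right _ ht).trans (hz.trans_le hn.2)
  simp only [mem_coe, mem_product, mem_sigma, mem_normFiber, mem_puncturedNormBall, ne_eq,
    ← norm_eq_zero, Nat.le_div_iff_mul_le hg, Zsqrtd.norm_eq_one_iff.2 hu]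
  refine ⟨trivial, ⟨by omega, hgm⟩, by omega, ?_⟩
  rw [mul_comm, hz]
  exact hn.2

theorem sum_card_puncturedNormBall_div_le (m : ℕ) :
    (∑ g ∈ puncturedNormBall m, #(puncturedNormBall (m / g.norm.natAbs)) : ℝ) ≤
      8 * m * ∑ n ∈ Icc 1 m, (#(normFiber n) : ℝ) / n := by
  rw [puncturedNormBall, sum_biUnion (pairwiseDisjoint_normFiber _), mul_sum]
  refine sum_le_sum fun n _ => ?_
  calc (∑ g ∈ normFiber n, (#(puncturedNormBall (m / g.norm.natAbs)) : ℝ))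
      = #(normFiber n) * (#(puncturedNormBall (m / n)) : ℝ) := by
        rw [sum_congr rfl fun g hg => by rw [mem_normFiber.1 hg], sum_const, nsmul_eq_mul]
    _ ≤ #(normFiber n) * (8 * (m / n : ℝ)) := by
        gcongr
        calc (#(puncturedNormBall (m / n)) : ℝ) ≤ 8 * ((m / n : ℕ) : ℝ) := by
              exact_mod_cast card_puncturedNormBall_le _
          _ ≤ 8 * (m / n : ℝ) := by gcongr; exact Nat.cast_div_le
    _ = 8 * m * (#(normFiber n) / n) := by ring

end GaussianInt

open GaussianInt in
theorem sum_r2_sq_le (m : ℕ) : ∑ n ∈ Icc 1 m, (r2 n : ℝ) ^ 2 ≤ 512 * m * (1 + log m) := by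
  have hunits : (#(normFiber 1) : ℝ) ≤ 8 := by
    exact_mod_cast (card_le_card (subset_biUnion_of_mem normFiber (by simp))).trans
      (card_puncturedNormBall_le 1)
  have hharm : ∑ n ∈ Icc 1 m, (#(normFiber n) : ℝ) / n ≤ 8 * (1 + log m) := by
    refine (sum_div_le_mul_sum_inv _ (C := 8) (fun j => ?_) m).trans ?_
    · rw [← Nat.cast_sum, ← card_puncturedNormBall]
      exact_mod_cast card_puncturedNormBall_le j
    · gcongr
      simpa [harmonic_eq_sum_Icc] using harmonic_le_one_add_log m
  calc ∑ n ∈ Icc 1 m, (r2 n : ℝ) ^ 2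
      = ((∑ n ∈ Icc 1 m, #(normFiber n) ^ 2 : ℕ) : ℝ) := by simp [r2_eq_card_normFiber]
    _ ≤ #(normFiber 1) *
          (∑ g ∈ puncturedNormBall m, #(puncturedNormBall (m / g.norm.natAbs)) : ℝ) := by
        exact_mod_cast sum_card_normFiber_sq_le m
    _ ≤ 8 * (8 * m * (8 * (1 + log m))) := by
        gcongr
        exact (sum_card_puncturedNormBall_div_le m).trans (by gcongr)
    _ = 512 * m * (1 + log m) := by ring

theorem sum_r2_sq_bound :
    ∃ C : ℝ, C > 0 ∧ ∀ x : ℝ, 2 ≤ x →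
      ∑ n ∈ Finset.Icc 1 ⌊x⌋₊, (r2 n : ℝ)^2 ≤ C * x * Real.log x := by
  refine ⟨1536, by norm_num, fun x hx => ?_⟩
  set m := ⌊x⌋₊
  have hm : (2 : ℝ) ≤ m := by exact_mod_cast Nat.le_floor (by exact_mod_cast hx)
  have hmx : (m : ℝ) ≤ x := Nat.floor_le (by linarith)
  have hlog : 1 ≤ 2 * log m := by
    linarith [log_two_gt_d9, log_le_log two_pos hm]
  calc ∑ n ∈ Icc 1 m, (r2 n : ℝ) ^ 2 ≤ 512 * m * (1 + log m) := sum_r2_sq_le m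
    _ ≤ 1536 * m * log m := by nlinarith
    _ ≤ 1536 * x * log x := by gcongr
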